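/- If H is an hypersemigroup that is left quasi-regular (or right quasi-regular, or intra-regular), then H is semisimple, i.e. A ⊆ H*A*H*A*H for every nonempty subset A of H. Also, if H is regular then it is both left and right quasi-regular. -/
import Mathlib


variable {H : Type*}

/-- Subset product induced by a hyperoperation. -/
def hprod (m : H → H → Set H) (A B : Set H) : Set H :=
  ⋃ a ∈ A, ⋃ b ∈ B, m a b

lemma hprod_mono (m : H → H → Set H) {A A' B B' : Set H}
    (hA : A ⊆ A') (hB : B ⊆ B') : hprod m A B ⊆ hprod m A' B' := by
  intro x hx
  simp only [hprod, Set.mem_iUnion] at hx ⊢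
  obtain ⟨a, ha, b, hb, h⟩ := hx
  exact ⟨a, hA ha, b, hB hb, h⟩

theorem stmt18 (m : H → H → Set H)
    (hne : ∀ a b : H, (m a b).Nonempty)
    (hassoc : ∀ A B C : Set H,
      hprod m (hprod m A B) C = hprod m A (hprod m B C)) :
    -- left quasi-regular → semisimple
    ((∀ A : Set H, A.Nonempty →
        A ⊆ hprod m (hprod m (hprod m Set.univ A) Set.univ) A) →
      (∀ A : Set H, A.Nonempty →
        A ⊆ hprod m (hprod m (hprod m (hprod m Set.univ A) Set.univ) A) Set.univ)) ∧
    -- right quasi-regular → semisimple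
    ((∀ A : Set H, A.Nonempty →
        A ⊆ hprod m (hprod m (hprod m A Set.univ) A) Set.univ) →
      (∀ A : Set H, A.Nonempty →
        A ⊆ hprod m (hprod m (hprod m (hprod m Set.univ A) Set.univ) A) Set.univ)) ∧
    -- intra-regular → semisimple
    ((∀ A : Set H, A.Nonempty →
        A ⊆ hprod m (hprod m (hprod m Set.univ A) A) Set.univ) →
      (∀ A : Set H, A.Nonempty →
        A ⊆ hprod m (hprod m (hprod m (hprod m Set.univ A) Set.univ) A) Set.univ)) ∧
    -- regular → left and right quasi-regular
    ((∀ A : Set H, A.Nonempty → A ⊆ hprod m (hprod m A Set.univ) A) →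
      ((∀ A : Set H, A.Nonempty →
          A ⊆ hprod m (hprod m (hprod m Set.univ A) Set.univ) A) ∧
       (∀ A : Set H, A.Nonempty →
          A ⊆ hprod m (hprod m (hprod m A Set.univ) A) Set.univ))) := by
  set U : Set H := Set.univ with hU
  have hsub : ∀ X : Set H, X ⊆ U := by intro X; rw [hU]; exact Set.subset_univ X
  refine ⟨?_, ?_, ?_, ?_⟩
  · -- left quasi-regular → semisimple
    intro h A hA
    -- L := (U*A*U)*A
    set L : Set H := hprod m (hprod m (hprod m U A) U) A with hL
    have hAL : A ⊆ L := h A hA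
    -- U*(U*A*U) ⊆ U*A*U
    have hUX : hprod m U (hprod m (hprod m U A) U) ⊆ hprod m (hprod m U A) U := by
      rw [← hassoc U (hprod m U A) U, ← hassoc U U A]
      exact hprod_mono m (hprod_mono m (hsub _) subset_rfl) subset_rfl
    -- U*L ⊆ L
    have hUL : hprod m U L ⊆ L := by
      rw [hL, ← hassoc U (hprod m (hprod m U A) U) A]
      exact hprod_mono m hUX subset_rfl
    have h1 : L ⊆ hprod m (hprod m (hprod m U L) U) A := by
      rw [hL]
      exact hprod_mono m (hprod_mono m (hprod_mono m subset_rfl hAL) subset_rfl) subset_rfl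
    have h2 : hprod m (hprod m (hprod m U L) U) A ⊆ hprod m L U := by
      rw [hassoc (hprod m U L) U A]
      exact hprod_mono m hUL (hsub _)
    exact hAL.trans (h1.trans h2)
  · -- right quasi-regular → semisimple
    intro h A hA
    set R : Set H := hprod m (hprod m (hprod m A U) A) U with hR
    have hAR : A ⊆ R := h A hA
    have h1 : R ⊆ hprod m (hprod m (hprod m R U) A) U := by
      rw [hR]
      exact hprod_mono m (hprod_mono m (hprod_mono m hAR subset_rfl) subset_rfl) subset_rfl
    have hRU : hprod m R U ⊆ hprod m (hprod m U A) U := by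
      rw [hR, hassoc (hprod m (hprod m A U) A) U U]
      exact hprod_mono m (hprod_mono m (hsub _) subset_rfl) (hsub _)
    have h2 : hprod m (hprod m (hprod m R U) A) U ⊆
        hprod m (hprod m (hprod m (hprod m U A) U) A) U :=
      hprod_mono m (hprod_mono m hRU subset_rfl) subset_rfl
    exact hAR.trans (h1.trans h2)
  · -- intra-regular → semisimple
    intro h A hA
    set X0 : Set H := hprod m U A with hX0
    set I : Set H := hprod m (hprod m X0 A) U with hI
    have hAI : A ⊆ I := h A hA
    have h1 : I ⊆ hprod m (hprod m X0 I) U := by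
      rw [hI]
      exact hprod_mono m (hprod_mono m subset_rfl hAI) subset_rfl
    have e1 : hprod m X0 I = hprod m (hprod m (hprod m X0 X0) A) U := by
      rw [hI, ← hassoc X0 (hprod m X0 A) U, ← hassoc X0 X0 A]
    have h2 : hprod m (hprod m X0 I) U ⊆ hprod m (hprod m (hprod m X0 U) A) U := by
      rw [e1, hassoc (hprod m (hprod m X0 X0) A) U U]
      exact hprod_mono m (hprod_mono m (hprod_mono m subset_rfl (hsub _))
        subset_rfl) (hsub _)
    exact hAI.trans (h1.trans h2)
  · -- regular → left and right quasi-regular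
    intro h
    constructor
    · intro A hA
      set G : Set H := hprod m (hprod m A U) A with hG
      have hAG : A ⊆ G := h A hA
      have h1 : G ⊆ hprod m (hprod m G U) A := by
        rw [hG]
        exact hprod_mono m (hprod_mono m hAG subset_rfl) subset_rfl
      have hGsub : G ⊆ hprod m U A := by
        rw [hG]
        exact hprod_mono m (hsub _) subset_rfl
      have h2 : hprod m (hprod m G U) A ⊆ hprod m (hprod m (hprod m U A) U) A :=
        hprod_mono m (hprod_mono m hGsub subset_rfl) subset_rfl
      exact hAG.trans (h1.trans h2)
    · intro A hA
      set G : Set H := hprod m (hprod m A U) A with hG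
      have hAG : A ⊆ G := h A hA
      have h1 : G ⊆ hprod m (hprod m A U) G := by
        rw [hG]
        exact hprod_mono m subset_rfl hAG
      have e : hprod m (hprod m A U) (hprod m (hprod m A U) A)
          = hprod m (hprod m (hprod m A U) A) (hprod m U A) := by
        rw [← hassoc (hprod m A U) (hprod m A U) A, ← hassoc (hprod m A U) A U,
          hassoc (hprod m (hprod m A U) A) U A]
      have h2 : hprod m (hprod m A U) G ⊆ hprod m G U := by
        rw [hG, e]
        exact hprod_mono m subset_rfl (hsub _)
      exact hAG.trans (h1.trans h2)
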